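/- Theorem 2 (dynamic-regret bound): Under the MOSP setting with ε > V̄ and λ_1 = 0, the dynamic regret satisfies Reg_T := Σ_{t=1}^T f_t(x_t) − Σ_{t=1}^T f_t(x_t^*) ≤ (R/α)·V_x + λ̄·V_g + R²/(2α) + α·G²·T/2 + μ·M²·(T+1)/2, where λ̄ := μ·M + (2·G·R + R²/(2α) + μ·M²/2)/(ε − V̄). -/

import Mathlib

open scoped RealInnerProductSpace
open Finset

/-- Entrywise positive projection on `ℝ^m`. -/
noncomputable def posProj {m : ℕ} (v : EuclideanSpace ℝ (Fin m)) :
    EuclideanSpace ℝ (Fin m) := WithLp.toLp 2 (fun i => max (v i) 0)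

/-!
The primal update minimizes a `1/α`-strongly convex function, so it satisfies the three-point
inequality; combined with first-order convexity of `f_t` this bounds the regret of round `t` by
`αG²/2 + ⟪λ_{t+1}, g_t(x_t^*)⟫ - ⟪λ_{t+1}, g_t(x_{t+1})⟫` plus a difference of squared distances to
`x_t^*`. Feasibility of `x_t^*` makes the first multiplier term nonpositive, the constraint
variation replaces `g_t` by `g_{t+1}` at a cost `‖λ_{t+1}‖ v_t`, and the growth of `‖λ‖²` under
the dual update absorbs `-⟪λ_{t+1}, g_{t+1}(x_{t+1})⟫`. Both remainders telescope, the primal one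
up to the path length `V_x`. Finally `‖λ_t‖ ≤ λ̄`: testing the primal update against the Slater
point shows that `‖λ‖` cannot grow once it exceeds `λ̄ - μM`, because the margin `ε - V̄` then
dominates.
-/

theorem EuclideanSpace.real_inner_eq_sum {ι : Type*} [Fintype ι] (x y : EuclideanSpace ℝ ι) :
    ⟪x, y⟫ = ∑ i, x i * y i := by
  simp [PiLp.inner_apply, mul_comm]

theorem EuclideanSpace.norm_le_sum_of_nonneg {ι : Type*} [Fintype ι] {x : EuclideanSpace ℝ ι}
    (hx : ∀ i, 0 ≤ x i) : ‖x‖ ≤ ∑ i, x i := by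
  refine le_of_pow_le_pow_left₀ two_ne_zero (sum_nonneg fun i _ => hx i) ?_
  rw [EuclideanSpace.real_norm_sq_eq]
  exact sum_sq_le_sq_sum_of_nonneg fun i _ => hx i

theorem real_inner_le_neg_mul_norm {ι : Type*} [Fintype ι] {l d : EuclideanSpace ℝ ι} {ε : ℝ}
    (hε : 0 ≤ ε) (hl : ∀ i, 0 ≤ l i) (hd : ∀ i, d i ≤ -ε) : ⟪l, d⟫ ≤ -(ε * ‖l‖) :=
  calc ⟪l, d⟫ ≤ ∑ i, l i * -ε := by
        rw [EuclideanSpace.real_inner_eq_sum]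
        exact sum_le_sum fun i _ => mul_le_mul_of_nonneg_left (hd i) (hl i)
    _ = -(ε * ∑ i, l i) := by rw [← sum_mul]; ring
    _ ≤ -(ε * ‖l‖) := by
        gcongr
        exact EuclideanSpace.norm_le_sum_of_nonneg hl

theorem real_inner_nonpos_of_nonneg_of_nonpos {ι : Type*} [Fintype ι] {l d : EuclideanSpace ℝ ι}
    (hl : ∀ i, 0 ≤ l i) (hd : ∀ i, d i ≤ 0) : ⟪l, d⟫ ≤ 0 := by
  simpa using real_inner_le_neg_mul_norm le_rfl hl (by simpa using hd)

theorem posProj_apply {m : ℕ} (v : EuclideanSpace ℝ (Fin m)) (i : Fin m) :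
    posProj v i = max (v i) 0 := rfl

theorem posProj_nonneg {m : ℕ} (v : EuclideanSpace ℝ (Fin m)) (i : Fin m) : 0 ≤ posProj v i :=
  le_max_right _ _

theorem norm_posProj_le {m : ℕ} (v : EuclideanSpace ℝ (Fin m)) : ‖posProj v‖ ≤ ‖v‖ := by
  refine le_of_pow_le_pow_left₀ two_ne_zero (norm_nonneg v) ?_
  simp only [EuclideanSpace.real_norm_sq_eq, posProj_apply]
  refine sum_le_sum fun i _ => ?_
  rcases le_total (v i) 0 with h | h <;> simp [h, sq_nonneg]

theorem real_inner_le_norm_mul_norm_posProj {m : ℕ} {l d : EuclideanSpace ℝ (Fin m)}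
    (hl : ∀ i, 0 ≤ l i) : ⟪l, d⟫ ≤ ‖l‖ * ‖posProj d‖ :=
  calc ⟪l, d⟫ ≤ ⟪l, posProj d⟫ := by
        simp only [EuclideanSpace.real_inner_eq_sum]
        exact sum_le_sum fun i _ => mul_le_mul_of_nonneg_left (le_max_left _ _) (hl i)
    _ ≤ ‖l‖ * ‖posProj d‖ := real_inner_le_norm _ _

theorem sq_norm_posProj_add_smul_le {m : ℕ} (l w : EuclideanSpace ℝ (Fin m)) (μ : ℝ) :
    ‖posProj (l + μ • w)‖ ^ 2 ≤ ‖l‖ ^ 2 + 2 * μ * ⟪l, w⟫ + μ ^ 2 * ‖w‖ ^ 2 := by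
  have h : ‖l + μ • w‖ ^ 2 = ‖l‖ ^ 2 + 2 * μ * ⟪l, w⟫ + μ ^ 2 * ‖w‖ ^ 2 := by
    rw [norm_add_sq_real, real_inner_smul_right, norm_smul, mul_pow, Real.norm_eq_abs, sq_abs]
    ring
  rw [← h]
  gcongr
  exact norm_posProj_le _

theorem neg_real_inner_le_of_eq_posProj {m : ℕ} {l l' w : EuclideanSpace ℝ (Fin m)} {μ M : ℝ}
    (hμ : 0 < μ) (hw : ‖w‖ ≤ M) (hl' : l' = posProj (l + μ • w)) :
    -⟪l, w⟫ ≤ μ * M ^ 2 / 2 + (‖l‖ ^ 2 / (2 * μ) - ‖l'‖ ^ 2 / (2 * μ)) := by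
  rw [← sub_le_iff_le_add', ← sub_div, le_div_iff₀ (by positivity)]
  have hw2 : ‖w‖ ^ 2 ≤ M ^ 2 := pow_le_pow_left₀ (norm_nonneg w) hw 2
  nlinarith [hl' ▸ sq_norm_posProj_add_smul_le l w μ]

theorem ConvexOn.apply_sub_le_of_hasFDerivAt {E : Type*} [NormedAddCommGroup E] [NormedSpace ℝ E]
    {s : Set E} {f : E → ℝ} {f' : E →L[ℝ] ℝ} {x y : E} (hf : ConvexOn ℝ s f) (hx : x ∈ s)
    (hy : y ∈ s) (hd : HasFDerivAt f f' x) : f' (y - x) ≤ f y - f x := by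
  let ℓ : ℝ →ᵃ[ℝ] E := AffineMap.lineMap x y
  have hline : ConvexOn ℝ (ℓ ⁻¹' s) (f ∘ ℓ) := hf.comp_affineMap ℓ
  have h0 : ℓ 0 = x := AffineMap.lineMap_apply_zero x y
  have h1 : ℓ 1 = y := AffineMap.lineMap_apply_one x y
  have hderiv : HasDerivAt (f ∘ ℓ) (f' (y - x)) 0 :=
    hd.comp_hasDerivAt_of_eq 0 AffineMap.hasDerivAt_lineMap h0.symm
  simpa [slope_def_field, h0, h1] using
    hline.le_slope_of_hasDerivAt (by simpa [h0] using hx) (by simpa [h1] using hy) zero_lt_one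
      hderiv

theorem StrongConvexOn.add_sq_norm_sub_le_of_isMinOn {E : Type*} [NormedAddCommGroup E]
    [NormedSpace ℝ E] {s : Set E} {m : ℝ} {h : E → ℝ} {a z : E} (hh : StrongConvexOn s m h)
    (hmin : IsMinOn h s a) (ha : a ∈ s) (hz : z ∈ s) :
    h a + m / 2 * ‖z - a‖ ^ 2 ≤ h z := by
  have hseg : ∀ θ ∈ Set.Ioo (0 : ℝ) 1, (1 - θ) * (m / 2 * ‖z - a‖ ^ 2) ≤ h z - h a := by
    rintro θ ⟨hθ0, hθ1⟩
    have hconv := hh.2 hz ha hθ0.le (sub_nonneg.2 hθ1.le) (add_sub_cancel θ 1)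
    have hle : h a ≤ h (θ • z + (1 - θ) • a) :=
      hmin (hh.1 hz ha hθ0.le (sub_nonneg.2 hθ1.le) (add_sub_cancel θ 1))
    simp only [smul_eq_mul] at hconv
    refine le_of_mul_le_mul_left ?_ hθ0
    linarith
  have hlim : Filter.Tendsto (fun θ : ℝ => (1 - θ) * (m / 2 * ‖z - a‖ ^ 2))
      (nhdsWithin 0 (Set.Ioi 0)) (nhds (m / 2 * ‖z - a‖ ^ 2)) := by
    have : Continuous fun θ : ℝ => (1 - θ) * (m / 2 * ‖z - a‖ ^ 2) := by fun_prop
    simpa using (this.tendsto 0).mono_left nhdsWithin_le_nhds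
  have := le_of_tendsto hlim (Filter.eventually_of_mem (Ioo_mem_nhdsGT one_pos) hseg)
  linarith

theorem convexOn_inner_of_nonneg {E ι : Type*} [NormedAddCommGroup E] [NormedSpace ℝ E]
    [Fintype ι] {s : Set E} (hs : Convex ℝ s) {l : EuclideanSpace ℝ ι}
    {g : E → EuclideanSpace ℝ ι} (hl : ∀ i, 0 ≤ l i) (hg : ∀ i, ConvexOn ℝ s fun x => g x i) :
    ConvexOn ℝ s fun x => ⟪l, g x⟫ := by
  have hsum : (fun x => ⟪l, g x⟫) = ∑ i, fun x => l i * g x i := by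
    ext x; simp [PiLp.inner_apply, mul_comm]
  rw [hsum]
  exact Finset.sum_induction _ (ConvexOn ℝ s) (fun _ _ => ConvexOn.add) (convexOn_const 0 hs)
    fun i _ => (hg i).smul (hl i)

theorem ConvexOn.strongConvexOn_add_sq_norm_sub {E : Type*} [NormedAddCommGroup E]
    [InnerProductSpace ℝ E] {s : Set E} {ψ : E → ℝ} (hψ : ConvexOn ℝ s ψ) (m : ℝ) (c : E) :
    StrongConvexOn s m fun w => ψ w + m / 2 * ‖w - c‖ ^ 2 := by
  rw [strongConvexOn_iff_convex]
  have h : (fun w => ψ w + m / 2 * ‖w - c‖ ^ 2 - m / 2 * ‖w‖ ^ 2) =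
      fun w => ψ w + ((-m) • innerₛₗ ℝ c) w + m / 2 * ‖c‖ ^ 2 := by
    ext w
    simp only [norm_sub_sq_real, real_inner_comm, neg_smul, LinearMap.neg_apply,
      LinearMap.smul_apply, innerₛₗ_apply_apply, smul_eq_mul]
    ring
  rw [h]
  exact (hψ.add (LinearMap.convexOn _ hψ.1)).add_const _

theorem ConvexOn.add_sq_norm_sub_le_of_isMinOn {E : Type*} [NormedAddCommGroup E]
    [InnerProductSpace ℝ E] {s : Set E} {ψ : E → ℝ} {α : ℝ} {c a z : E}
    (hψ : ConvexOn ℝ s ψ) (hmin : IsMinOn (fun w => ψ w + ‖w - c‖ ^ 2 / (2 * α)) s a)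
    (ha : a ∈ s) (hz : z ∈ s) :
    ψ a + ‖a - c‖ ^ 2 / (2 * α) + ‖z - a‖ ^ 2 / (2 * α) ≤ ψ z + ‖z - c‖ ^ 2 / (2 * α) := by
  have hdiv : ∀ r : ℝ, r / (2 * α) = α⁻¹ / 2 * r := fun r => by ring
  simp only [hdiv] at hmin ⊢
  exact (hψ.strongConvexOn_add_sq_norm_sub α⁻¹ c).add_sq_norm_sub_le_of_isMinOn hmin ha hz

theorem mul_le_mul_sq_div_two_add_sq_div {α a b : ℝ} (hα : 0 < α) :
    a * b ≤ α * a ^ 2 / 2 + b ^ 2 / (2 * α) := by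
  have h : α * a ^ 2 / 2 + b ^ 2 / (2 * α) - a * b = (α * a - b) ^ 2 / (2 * α) := by
    field_simp
    ring
  have : 0 ≤ (α * a - b) ^ 2 / (2 * α) := by positivity
  linarith

theorem sq_norm_sub_sub_sq_norm_sub_le {E : Type*} [SeminormedAddCommGroup E] {p q y : E} {R : ℝ}
    (hp : ‖p - y‖ ≤ R) (hq : ‖q - y‖ ≤ R) : ‖p - y‖ ^ 2 - ‖q - y‖ ^ 2 ≤ 2 * R * ‖p - q‖ := by
  have h := (le_abs_self _).trans (abs_norm_sub_norm_le (p - y) (q - y))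
  rw [sub_sub_sub_cancel_right] at h
  have h0 : 0 ≤ ‖p - y‖ + ‖q - y‖ := by positivity
  nlinarith [mul_le_mul_of_nonneg_left h h0, norm_nonneg (p - q)]

/-- The primal update of MOSP, with `p = ∇f_{t-1}(x_{t-1})`, `l = λ_t` and `g = g_{t-1}`. -/
def IsPrimalStep {E ι : Type*} [NormedAddCommGroup E] [InnerProductSpace ℝ E] [Fintype ι]
    (s : Set E) (α : ℝ) (p x : E) (l : EuclideanSpace ℝ ι) (g : E → EuclideanSpace ℝ ι)
    (x' : E) : Prop :=
  x' ∈ s ∧ ∀ w ∈ s, ⟪p, x' - x⟫ + ⟪l, g x'⟫ + ‖x' - x‖ ^ 2 / (2 * α) ≤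
    ⟪p, w - x⟫ + ⟪l, g w⟫ + ‖w - x‖ ^ 2 / (2 * α)

namespace IsPrimalStep

variable {E : Type*} [NormedAddCommGroup E] [InnerProductSpace ℝ E] {s : Set E} {α : ℝ}
  {p x x' : E}

theorem sub_le [CompleteSpace E] {ι : Type*} [Fintype ι] {f : E → ℝ}
    {g : E → EuclideanSpace ℝ ι} {l : EuclideanSpace ℝ ι} {z : E} {G : ℝ}
    (hstep : IsPrimalStep s α p x l g x') (hf : ConvexOn ℝ s f) (hp : HasGradientAt f p x)
    (hpG : ‖p‖ ≤ G) (hl : ∀ i, 0 ≤ l i) (hg : ∀ i, ConvexOn ℝ s fun w => g w i) (hα : 0 < α)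
    (hx : x ∈ s) (hz : z ∈ s) :
    f x - f z ≤ α * G ^ 2 / 2 + ⟪l, g z⟫ - ⟪l, g x'⟫ + (‖z - x‖ ^ 2 - ‖z - x'‖ ^ 2) / (2 * α) := by
  have hψ : ConvexOn ℝ s fun w => ⟪p, w - x⟫ + ⟪l, g w⟫ := by
    have hlin : ConvexOn ℝ s fun w => ⟪p, w - x⟫ := by
      simp_rw [inner_sub_right, sub_eq_add_neg]
      exact (LinearMap.convexOn (innerₛₗ ℝ p) hf.1).add_const _
    exact hlin.add (convexOn_inner_of_nonneg hf.1 hl hg)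
  have hthree := hψ.add_sq_norm_sub_le_of_isMinOn hstep.2 hstep.1 hz
  have hgrad : ⟪p, z - x⟫ ≤ f z - f x :=
    hf.apply_sub_le_of_hasFDerivAt hx hz hp.hasFDerivAt
  have hmove : ⟪p, x - x'⟫ ≤ α * G ^ 2 / 2 + ‖x' - x‖ ^ 2 / (2 * α) :=
    calc ⟪p, x - x'⟫ ≤ G * ‖x' - x‖ := by
          rw [norm_sub_rev]
          exact (real_inner_le_norm _ _).trans (by gcongr)
      _ ≤ _ := mul_le_mul_sq_div_two_add_sq_div hα
  have hsplit : ⟪p, x - x'⟫ = -⟪p, x' - x⟫ := by rw [← inner_neg_right, neg_sub]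
  rw [sub_div]
  linarith

theorem real_inner_le_of_slater {m : ℕ} {g g' : E → EuclideanSpace ℝ (Fin m)}
    {l : EuclideanSpace ℝ (Fin m)} {xs : E} {G R ε V : ℝ}
    (hstep : IsPrimalStep s α p x l g x') (hR : ∀ a ∈ s, ∀ b ∈ s, ‖a - b‖ ≤ R) (hx : x ∈ s)
    (hxs : xs ∈ s) (hpG : ‖p‖ ≤ G) (hl : ∀ i, 0 ≤ l i) (hα : 0 < α) (hε : 0 ≤ ε)
    (hslater : ∀ i, g xs i ≤ -ε) (hV : ‖posProj (g' x' - g x')‖ ≤ V) :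
    ⟪l, g' x'⟫ ≤ 2 * G * R + R ^ 2 / (2 * α) - (ε - V) * ‖l‖ := by
  have hG : 0 ≤ G := (norm_nonneg p).trans hpG
  have hinner : ∀ a b, ‖a - b‖ ≤ R → ⟪p, a - b⟫ ≤ G * R := fun a b hab =>
    (real_inner_le_norm _ _).trans (mul_le_mul hpG hab (norm_nonneg _) hG)
  have hxs_x := hinner xs x (hR _ hxs _ hx)
  have hx_x' := hinner x x' (hR _ hx _ hstep.1)
  have hsplit : ⟪p, x - x'⟫ = -⟪p, x' - x⟫ := by rw [← inner_neg_right, neg_sub]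
  have hmin := hstep.2 xs hxs
  have hneg := real_inner_le_neg_mul_norm hε hl hslater
  have hquad : ‖xs - x‖ ^ 2 / (2 * α) ≤ R ^ 2 / (2 * α) := by
    gcongr
    exact hR _ hxs _ hx
  have hquad' : 0 ≤ ‖x' - x‖ ^ 2 / (2 * α) := by positivity
  have hshift : ⟪l, g' x' - g x'⟫ ≤ ‖l‖ * V :=
    (real_inner_le_norm_mul_norm_posProj hl).trans (mul_le_mul_of_nonneg_left hV (norm_nonneg l))
  rw [inner_sub_right] at hshift
  linarith

theorem sub_le_of_eq_posProj [CompleteSpace E] {m : ℕ} {f : E → ℝ}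
    {g g' : E → EuclideanSpace ℝ (Fin m)} {l l' : EuclideanSpace ℝ (Fin m)} {z : E}
    {μ G M L v : ℝ} (hstep : IsPrimalStep s α p x l g x') (hf : ConvexOn ℝ s f)
    (hp : HasGradientAt f p x) (hpG : ‖p‖ ≤ G) (hl : ∀ i, 0 ≤ l i)
    (hg : ∀ i, ConvexOn ℝ s fun w => g w i) (hα : 0 < α) (hμ : 0 < μ) (hx : x ∈ s) (hz : z ∈ s)
    (hgz : ∀ i, g z i ≤ 0) (hlL : ‖l‖ ≤ L) (hv : ‖posProj (g' x' - g x')‖ ≤ v)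
    (hM : ‖g' x'‖ ≤ M) (hl' : l' = posProj (l + μ • g' x')) :
    f x - f z ≤ α * G ^ 2 / 2 + L * v + μ * M ^ 2 / 2 +
      (‖l‖ ^ 2 / (2 * μ) - ‖l'‖ ^ 2 / (2 * μ)) + (‖z - x‖ ^ 2 - ‖z - x'‖ ^ 2) / (2 * α) := by
  have hprimal := hstep.sub_le hf hp hpG hl hg hα hx hz
  have hfeas := real_inner_nonpos_of_nonneg_of_nonpos hl hgz
  have hshift : ⟪l, g' x' - g x'⟫ ≤ L * v :=
    (real_inner_le_norm_mul_norm_posProj hl).trans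
      (mul_le_mul hlL hv (norm_nonneg _) ((norm_nonneg l).trans hlL))
  rw [inner_sub_right] at hshift
  have hdual := neg_real_inner_le_of_eq_posProj hμ hM hl'
  linarith

end IsPrimalStep

theorem posProj_recursion_nonneg {m : ℕ} {l w : ℕ → EuclideanSpace ℝ (Fin m)} {μ : ℝ}
    (h1 : l 1 = 0) (hrec : ∀ t, 1 ≤ t → l (t + 1) = posProj (l t + μ • w t)) :
    ∀ t, 1 ≤ t → ∀ i, 0 ≤ l t i := by
  rintro (_ | _ | t) ht i
  · omega
  · simp [h1]
  · rw [hrec (t + 1) (by omega)]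
    exact posProj_nonneg _ i

theorem norm_posProj_add_smul_le {m : ℕ} {l w : EuclideanSpace ℝ (Fin m)} {μ M C δ : ℝ}
    (hμ : 0 < μ) (hδ : 0 < δ) (hw : ‖w‖ ≤ M) (hdrift : ⟪l, w⟫ ≤ C - δ * ‖l‖)
    (hl : ‖l‖ ≤ μ * M + (C + μ * M ^ 2 / 2) / δ) :
    ‖posProj (l + μ • w)‖ ≤ μ * M + (C + μ * M ^ 2 / 2) / δ := by
  rcases le_or_gt ‖l‖ ((C + μ * M ^ 2 / 2) / δ) with hsmall | hlarge
  · calc ‖posProj (l + μ • w)‖ ≤ ‖l‖ + μ * ‖w‖ := by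
          refine (norm_posProj_le _).trans ((norm_add_le _ _).trans_eq ?_)
          rw [norm_smul, Real.norm_of_nonneg hμ.le]
      _ ≤ _ := by nlinarith
  · rw [div_lt_iff₀ hδ] at hlarge
    refine le_of_pow_le_pow_left₀ two_ne_zero (norm_nonneg l) ?_ |>.trans hl
    have hw2 : ‖w‖ ^ 2 ≤ M ^ 2 := pow_le_pow_left₀ (norm_nonneg w) hw 2
    nlinarith [sq_norm_posProj_add_smul_le l w μ]

theorem norm_le_of_posProj_recursion {m : ℕ} {l w : ℕ → EuclideanSpace ℝ (Fin m)}
    {μ M C δ : ℝ} (hμ : 0 < μ) (hδ : 0 < δ) (h1 : l 1 = 0)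
    (hrec : ∀ t, 1 ≤ t → l (t + 1) = posProj (l t + μ • w t))
    (hw : ∀ t, 1 ≤ t → ‖w t‖ ≤ M) (hdrift : ∀ t, 1 ≤ t → ⟪l t, w t⟫ ≤ C - δ * ‖l t‖) :
    ∀ t, 1 ≤ t → ‖l t‖ ≤ μ * M + (C + μ * M ^ 2 / 2) / δ := by
  intro t ht
  induction t, ht using Nat.le_induction with
  | base =>
    have hC : 0 ≤ C := by simpa [h1] using hdrift 1 le_rfl
    have hM : 0 ≤ M := (norm_nonneg _).trans (hw 1 le_rfl)
    rw [h1, norm_zero]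
    exact add_nonneg (mul_nonneg hμ.le hM) (div_nonneg (by positivity) hδ.le)
  | succ t ht ih =>
    rw [hrec t ht]
    exact norm_posProj_add_smul_le hμ hδ (hw t ht) (hdrift t ht) ih

theorem sum_sq_norm_sub_sub_le {E : Type*} [SeminormedAddCommGroup E] {s : Set E} {R : ℝ}
    (hR : ∀ a ∈ s, ∀ b ∈ s, ‖a - b‖ ≤ R) {z y : ℕ → E} {T : ℕ} (hT : 1 ≤ T)
    (hz : ∀ t ≤ T, z t ∈ s) (hy : ∀ t, y t ∈ s) :
    ∑ t ∈ Icc 1 T, (‖z t - y t‖ ^ 2 - ‖z t - y (t + 1)‖ ^ 2) ≤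
      R ^ 2 + 2 * R * ∑ t ∈ Icc 1 T, ‖z t - z (t - 1)‖ := by
  -- `b (t + 1) = ‖z t - y (t + 1)‖ ^ 2`: regrouping compares `z t` and `z (t - 1)` seen from `y t`.
  set b : ℕ → ℝ := fun t => ‖z (t - 1) - y t‖ ^ 2
  have htele : ∑ t ∈ Icc 1 T, (‖z t - y t‖ ^ 2 - ‖z t - y (t + 1)‖ ^ 2) =
      ∑ t ∈ Icc 1 T, (‖z t - y t‖ ^ 2 - b t) - (b (T + 1) - b 1) := by
    rw [← sum_Icc_sub hT b, ← sum_sub_distrib]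
    exact sum_congr rfl fun t _ => by simp only [b, Nat.add_sub_cancel]; ring
  have hstep : ∀ t ∈ Icc 1 T, ‖z t - y t‖ ^ 2 - b t ≤ 2 * R * ‖z t - z (t - 1)‖ := by
    intro t ht
    have htT := (mem_Icc.1 ht).2
    exact sq_norm_sub_sub_sq_norm_sub_le (hR _ (hz t htT) _ (hy t))
      (hR _ (hz (t - 1) (by omega)) _ (hy t))
  have hb1 : b 1 ≤ R ^ 2 := pow_le_pow_left₀ (norm_nonneg _) (hR _ (hz 0 (by omega)) _ (hy 1)) 2
  have hb0 : 0 ≤ b (T + 1) := by positivity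
  rw [htele, mul_sum]
  linarith [sum_le_sum hstep]

theorem sum_le_of_le_add_sub_add_sq_norm_sub {E : Type*} [SeminormedAddCommGroup E] {s : Set E}
    {R α : ℝ} (hR : ∀ a ∈ s, ∀ b ∈ s, ‖a - b‖ ≤ R) (hα : 0 < α) {T : ℕ} (hT : 1 ≤ T)
    {z y : ℕ → E} (hz : ∀ t ≤ T, z t ∈ s) (hy : ∀ t, y t ∈ s) {r c u : ℕ → ℝ}
    (hr : ∀ t ∈ Icc 1 T, r t ≤ c t + (u t - u (t + 1)) +
      (‖z t - y t‖ ^ 2 - ‖z t - y (t + 1)‖ ^ 2) / (2 * α)) (hu : 0 ≤ u (T + 1)) :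
    ∑ t ∈ Icc 1 T, r t ≤ ∑ t ∈ Icc 1 T, c t + u 1 +
      R / α * ∑ t ∈ Icc 1 T, ‖z t - z (t - 1)‖ + R ^ 2 / (2 * α) := by
  have hsum := sum_le_sum hr
  have hdual := sum_Icc_sub hT u
  have hprimal := div_le_div_of_nonneg_right (sum_sq_norm_sub_sub_le hR hT hz hy)
    (by positivity : (0 : ℝ) ≤ 2 * α)
  have hsplit : (R ^ 2 + 2 * R * ∑ t ∈ Icc 1 T, ‖z t - z (t - 1)‖) / (2 * α) =
      R / α * ∑ t ∈ Icc 1 T, ‖z t - z (t - 1)‖ + R ^ 2 / (2 * α) := by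
    field_simp
    ring
  simp only [sum_add_distrib, sum_sub_distrib, ← sum_div] at hsum hdual hprimal
  linarith

theorem mosp_dynamic_regret_bound_general {n m : ℕ}
    (T : ℕ) (hT : 1 ≤ T)
    (X : Set (EuclideanSpace ℝ (Fin n))) (hXconv : Convex ℝ X)
    (R G M ε Vbar α μ : ℝ)
    (hR : ∀ x ∈ X, ∀ y ∈ X, ‖x - y‖ ≤ R)
    (f : ℕ → EuclideanSpace ℝ (Fin n) → ℝ)
    (hfconv : ∀ t, ConvexOn ℝ Set.univ (f t))
    (hfdiff : ∀ t, Differentiable ℝ (f t))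
    (hG : ∀ t, ∀ x ∈ X, ‖gradient (f t) x‖ ≤ G)
    (g : ℕ → EuclideanSpace ℝ (Fin n) → EuclideanSpace ℝ (Fin m))
    (hgconv : ∀ t i, ConvexOn ℝ Set.univ fun x => g t x i)
    (hM : ∀ t, ∀ x ∈ X, ‖g t x‖ ≤ M)
    (hε : 0 < ε)
    (hSlater : ∃ xt ∈ X, ∀ t, ∀ i, g t xt i ≤ -ε)
    (hvar : ∀ t, ∀ x ∈ X, ‖posProj (g (t + 1) x - g t x)‖ ≤ Vbar)
    (hεV : Vbar < ε)
    (hα : 0 < α) (hμ : 0 < μ)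
    (x : ℕ → EuclideanSpace ℝ (Fin n))
    (lam : ℕ → EuclideanSpace ℝ (Fin m))
    (hx0 : x 0 ∈ X) (hlam1 : lam 1 = 0)
    (hprimal : ∀ t, 1 ≤ t → x t ∈ X ∧ ∀ z ∈ X,
      ⟪gradient (f (t - 1)) (x (t - 1)), x t - x (t - 1)⟫ + ⟪lam t, g (t - 1) (x t)⟫ +
          ‖x t - x (t - 1)‖ ^ 2 / (2 * α) ≤
        ⟪gradient (f (t - 1)) (x (t - 1)), z - x (t - 1)⟫ + ⟪lam t, g (t - 1) z⟫ +
          ‖z - x (t - 1)‖ ^ 2 / (2 * α))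
    (hdual : ∀ t, 1 ≤ t → lam (t + 1) = posProj (lam t + μ • g t (x t)))
    (xstar : ℕ → EuclideanSpace ℝ (Fin n))
    (hxstar0 : xstar 0 ∈ X)
    (hxstar : ∀ t, 1 ≤ t → t ≤ T → xstar t ∈ X ∧ (∀ i, g t (xstar t) i ≤ 0) ∧
      ∀ z ∈ X, (∀ i, g t z i ≤ 0) → f t (xstar t) ≤ f t z)
    (v : ℕ → ℝ)
    (hvarv : ∀ t, ∀ x ∈ X, ‖posProj (g (t + 1) x - g t x)‖ ≤ v t) :
    ∑ t ∈ Icc 1 T, f t (x t) - ∑ t ∈ Icc 1 T, f t (xstar t) ≤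
      R / α * (∑ t ∈ Icc 1 T, ‖xstar t - xstar (t - 1)‖) +
        (μ * M + (2 * G * R + R ^ 2 / (2 * α) + μ * M ^ 2 / 2) / (ε - Vbar)) *
          (∑ t ∈ Icc 1 T, v t) +
        R ^ 2 / (2 * α) + α * G ^ 2 * T / 2 + μ * M ^ 2 * (T + 1) / 2 := by
  obtain ⟨xs, hxsX, hxs⟩ := hSlater
  have hstep : ∀ t,
      IsPrimalStep X α (gradient (f t) (x t)) (x t) (lam (t + 1)) (g t) (x (t + 1)) :=
    fun t => hprimal (t + 1) t.succ_pos
  have hxX : ∀ t, x t ∈ X := fun t => t.casesOn hx0 fun t => (hstep t).1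
  have hxstarX : ∀ t ≤ T, xstar t ∈ X := by
    rintro (_ | t) ht
    exacts [hxstar0, (hxstar (t + 1) t.succ_pos ht).1]
  have hlam := posProj_recursion_nonneg hlam1 hdual
  set L := μ * M + (2 * G * R + R ^ 2 / (2 * α) + μ * M ^ 2 / 2) / (ε - Vbar)
  have hbound : ∀ t, 1 ≤ t → ‖lam t‖ ≤ L := by
    refine norm_le_of_posProj_recursion hμ (sub_pos.2 hεV) hlam1 hdual
      (fun t _ => hM t _ (hxX t)) ?_
    rintro (_ | t) ht
    · omega
    · exact (hstep t).real_inner_le_of_slater hR (hxX t) hxsX (hG t _ (hxX t)) (hlam _ ht) hα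
        hε.le (hxs t) (hvar t _ (hxX _))
  have hround : ∀ t ∈ Icc 1 T, f t (x t) - f t (xstar t) ≤ (α * G ^ 2 / 2 + L * v t +
      μ * M ^ 2 / 2) + (‖lam (t + 1)‖ ^ 2 / (2 * μ) - ‖lam (t + 1 + 1)‖ ^ 2 / (2 * μ)) +
      (‖xstar t - x t‖ ^ 2 - ‖xstar t - x (t + 1)‖ ^ 2) / (2 * α) := fun t ht => by
    obtain ⟨hzX, hgz, -⟩ := hxstar t (mem_Icc.1 ht).1 (mem_Icc.1 ht).2
    exact (hstep t).sub_le_of_eq_posProj ((hfconv t).subset (Set.subset_univ X) hXconv)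
      (hfdiff t (x t)).hasGradientAt (hG t _ (hxX t)) (hlam (t + 1) (by omega))
      (fun i => (hgconv t i).subset (Set.subset_univ X) hXconv) hα hμ (hxX t) hzX hgz
      (hbound (t + 1) (by omega)) (hvarv t _ (hxX _)) (hM (t + 1) _ (hxX _))
      (hdual (t + 1) (by omega))
  have hsum := sum_le_of_le_add_sub_add_sq_norm_sub hR hα hT hxstarX hxX hround (by positivity)
  have hlam2 := neg_real_inner_le_of_eq_posProj hμ (hM 1 _ (hxX 1)) (hdual 1 le_rfl)
  rw [hlam1, inner_zero_left, norm_zero, zero_pow two_ne_zero, zero_div] at hlam2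
  simp only [sum_add_distrib, sum_const, Nat.card_Icc, Nat.add_sub_cancel, nsmul_eq_mul,
    ← mul_sum] at hsum
  rw [← sum_sub_distrib]
  linarith

/-- Theorem 2 (dynamic-regret bound) for the MOSP recursion. -/
theorem mosp_dynamic_regret_bound {n m : ℕ} (hm : 0 < m)
    (T : ℕ) (hT : 1 ≤ T)
    (X : Set (EuclideanSpace ℝ (Fin n))) (hXne : X.Nonempty) (hXconv : Convex ℝ X)
    (R G M ε Vbar α μ : ℝ)
    (hR : ∀ x ∈ X, ∀ y ∈ X, ‖x - y‖ ≤ R)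
    (f : ℕ → EuclideanSpace ℝ (Fin n) → ℝ)
    (hfconv : ∀ t, ConvexOn ℝ Set.univ (f t))
    (hfdiff : ∀ t, Differentiable ℝ (f t))
    (hG : ∀ t, ∀ x ∈ X, ‖gradient (f t) x‖ ≤ G)
    (g : ℕ → EuclideanSpace ℝ (Fin n) → EuclideanSpace ℝ (Fin m))
    (hgconv : ∀ t i, ConvexOn ℝ Set.univ fun x => g t x i)
    (hM : ∀ t, ∀ x ∈ X, ‖g t x‖ ≤ M)
    (hε : 0 < ε)
    (hSlater : ∃ xt ∈ X, ∀ t, ∀ i, g t xt i ≤ -ε)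
    (hVbar : 0 ≤ Vbar)
    (hvar : ∀ t, ∀ x ∈ X, ‖posProj (g (t + 1) x - g t x)‖ ≤ Vbar)
    (hεV : Vbar < ε)
    (hα : 0 < α) (hμ : 0 < μ)
    (x : ℕ → EuclideanSpace ℝ (Fin n))
    (lam : ℕ → EuclideanSpace ℝ (Fin m))
    (hx0 : x 0 ∈ X) (hlam1 : lam 1 = 0)
    (hprimal : ∀ t, 1 ≤ t → x t ∈ X ∧ ∀ z ∈ X,
      ⟪gradient (f (t - 1)) (x (t - 1)), x t - x (t - 1)⟫ + ⟪lam t, g (t - 1) (x t)⟫ +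
          ‖x t - x (t - 1)‖ ^ 2 / (2 * α) ≤
        ⟪gradient (f (t - 1)) (x (t - 1)), z - x (t - 1)⟫ + ⟪lam t, g (t - 1) z⟫ +
          ‖z - x (t - 1)‖ ^ 2 / (2 * α))
    (hdual : ∀ t, 1 ≤ t → lam (t + 1) = posProj (lam t + μ • g t (x t)))
    (xstar : ℕ → EuclideanSpace ℝ (Fin n))
    (hxstar0 : xstar 0 ∈ X)
    (hxstar : ∀ t, 1 ≤ t → t ≤ T → xstar t ∈ X ∧ (∀ i, g t (xstar t) i ≤ 0) ∧
      ∀ z ∈ X, (∀ i, g t z i ≤ 0) → f t (xstar t) ≤ f t z)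
    (v : ℕ → ℝ) (hv : ∀ t, 0 ≤ v t)
    (hvarv : ∀ t, ∀ x ∈ X, ‖posProj (g (t + 1) x - g t x)‖ ≤ v t) :
    ∑ t ∈ Icc 1 T, f t (x t) - ∑ t ∈ Icc 1 T, f t (xstar t) ≤
      R / α * (∑ t ∈ Icc 1 T, ‖xstar t - xstar (t - 1)‖) +
        (μ * M + (2 * G * R + R ^ 2 / (2 * α) + μ * M ^ 2 / 2) / (ε - Vbar)) *
          (∑ t ∈ Icc 1 T, v t) +
        R ^ 2 / (2 * α) + α * G ^ 2 * T / 2 + μ * M ^ 2 * (T + 1) / 2 :=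
  mosp_dynamic_regret_bound_general T hT X hXconv R G M ε Vbar α μ hR f hfconv hfdiff hG g hgconv hM
    hε hSlater hvar hεV hα hμ x lam hx0 hlam1 hprimal hdual xstar hxstar0 hxstar v hvarv
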